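/- arXiv:2108.08135 — 2 statements merged into one kernel-verified Lean document; each statement's English description precedes it below -/
import Mathlib

section
/- Let R be a ring and S a right R-module. If for every family (M_i)_{i ∈ I} of left R-modules the canonical map S ⊗_R ∏_{i∈I} M_i → ∏_{i∈I} (S ⊗_R M_i) is surjective (in particular when each M_i = R), then S is finitely generated as a right R-module. -/
universe u v

open TensorProduct Cardinal Set


/-- Lemma A: any `Type u`-indexed family of elements of `S` lies in the span of a
finite set, given surjectivity of the canonical map for `M i = R`. -/
theorem aux_span_finset {R : Type u} [CommRing R] {S : Type v} [AddCommGroup S] [Module R S]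
    {I : Type u}
    (hsurj : Function.Surjective (TensorProduct.piRightHom R R S (fun _ : I => R)))
    (s : I → S) : ∃ t : Finset S, ∀ i, s i ∈ Submodule.span R (t : Set S) := by
  classical
  obtain ⟨x, hx⟩ := hsurj (fun i => s i ⊗ₜ 1)
  obtain ⟨T, hT⟩ := TensorProduct.exists_finset x
  refine ⟨T.image Prod.fst, fun i => ?_⟩
  have h1 : s i ⊗ₜ[R] (1 : R) = ∑ p ∈ T, p.1 ⊗ₜ[R] (p.2 i) := by
    have h2 := congrFun hx i
    rw [hT, map_sum] at h2
    simpa [TensorProduct.piRightHom_tmul] using h2.symm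
  have h3 := congrArg (TensorProduct.rid R S) h1
  rw [map_sum] at h3
  simp only [TensorProduct.rid_tmul, one_smul] at h3
  rw [h3]
  refine Submodule.sum_mem _ fun p hp => Submodule.smul_mem _ _
    (Submodule.subset_span ?_)
  simp only [Finset.coe_image, Set.mem_image, Finset.mem_coe]
  exact ⟨p, hp, rfl⟩


/-- If for every family `(M i)` of `R`-modules the canonical map
`S ⊗[R] (Π i, M i) → Π i, (S ⊗[R] M i)` is surjective, then `S` is a finitely
generated `R`-module. -/
theorem finite_of_piRightHom_surjective
    {R : Type u} [CommRing R] (S : Type v) [AddCommGroup S] [Module R S]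
    (h : ∀ (ι : Type u) (M : ι → Type u) [∀ i, AddCommGroup (M i)]
      [∀ i, Module R (M i)],
      Function.Surjective (TensorProduct.piRightHom R R S M)) :
    Module.Finite R S := by
  classical
  by_contra hfin
  -- no `Type u`-indexed family generates `S`
  have hspan : ∀ (I : Type u) (f : I → S), Submodule.span R (Set.range f) ≠ ⊤ := by
    intro I f htop
    obtain ⟨t, ht⟩ := aux_span_finset (h I fun _ => R) f
    refine hfin ⟨?_⟩
    have he : (⊤ : Submodule R S) = Submodule.span R (t : Set S) := by
      refine le_antisymm ?_ le_top
      rw [← htop, Submodule.span_le]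
      rintro _ ⟨i, rfl⟩
      exact ht i
    rw [he]
    exact ⟨t, rfl⟩
  have hex : ∀ (I : Type u) (f : I → S), ∃ x : S, x ∉ Submodule.span R (Set.range f) := by
    intro I f
    by_contra hc
    push_neg at hc
    exact hspan I f (Submodule.eq_top_iff'.2 hc)
  set c : Cardinal.{u} := max (#R) ℵ₀ with hc_def
  set κ : Cardinal.{u} := Order.succ c with hκ_def
  set ι : Type u := κ.ord.ToType with hι_def
  have wf : WellFounded ((· < ·) : ι → ι → Prop) := IsWellFounded.wf
  set F : ∀ i : ι, (∀ j : ι, j < i → S) → S :=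
    fun i rec => Classical.choose (hex (Set.Iio i) (fun j => rec j.1 j.2)) with hF_def
  set g : ι → S := wf.fix F with hg_def
  have hg : ∀ i : ι, g i ∉ Submodule.span R (Set.range fun j : Set.Iio i => g j.1) := by
    intro i
    have heq : g i = Classical.choose (hex (Set.Iio i) (fun j => g j.1)) := by
      rw [hg_def, WellFounded.fix_eq]
    rw [heq]
    exact Classical.choose_spec (hex (Set.Iio i) (fun j => g j.1))
  have hinj : Function.Injective g := by
    intro a b hab
    rcases lt_trichotomy a b with hl | he | hl
    · have hmem : g b ∈ Submodule.span R (Set.range fun j : Set.Iio b => g j.1) := by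
        rw [← hab]
        exact Submodule.subset_span ⟨⟨a, hl⟩, rfl⟩
      exact absurd hmem (hg b)
    · exact he
    · have hmem : g a ∈ Submodule.span R (Set.range fun j : Set.Iio a => g j.1) := by
        rw [hab]
        exact Submodule.subset_span ⟨⟨b, hl⟩, rfl⟩
      exact absurd hmem (hg a)
  obtain ⟨t, ht⟩ := aux_span_finset (h ι fun _ => R) g
  haveI : Module.Finite R (Submodule.span R (t : Set S)) :=
    Module.Finite.span_of_finite R t.finite_toSet
  obtain ⟨n, f, hf⟩ := Module.Finite.exists_fin' R (Submodule.span R (t : Set S))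
  set e : ι → Submodule.span R (t : Set S) := fun i => ⟨g i, ht i⟩ with he_def
  have hinj_e : Function.Injective e := fun a b hab => hinj (congrArg Subtype.val hab)
  set j : ι → (Fin n → R) := fun i => Function.surjInv hf (e i) with hj_def
  have hinj_j : Function.Injective j := by
    intro a b hab
    apply hinj_e
    rw [← Function.surjInv_eq hf (e a), ← Function.surjInv_eq hf (e b)]
    exact congrArg f hab
  have h1 : #ι = κ := Cardinal.mk_ord_toType κ
  have h2 : #(Fin n → R) ≤ c := by
    rw [Cardinal.mk_arrow]
    simp only [Cardinal.lift_uzero, Cardinal.mk_fin, Cardinal.lift_natCast]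
    exact Cardinal.power_nat_le_max
  have h3 : κ ≤ c := h1 ▸ (Cardinal.mk_le_of_injective hinj_j).trans h2
  exact absurd h3 (not_le.2 (Order.lt_succ c))
end

section
/- Let R be a ring, A a finitely presented right R-module and X a pure injective left R-module. Then the abelian group (or left R-module when R is commutative) A ⊗_R X is pure injective (over Z, respectively over R when R is commutative). -/
universe v

/-- A monomorphism of `R`-modules is pure if tensoring with any module preserves
injectivity. -/
def IsPureMono {R : Type*} [CommRing R] {L M : Type*}
    [AddCommGroup L] [Module R L] [AddCommGroup M] [Module R M]
    (f : L →ₗ[R] M) : Prop :=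
  Function.Injective f ∧
    ∀ (X : Type*) [AddCommGroup X] [Module R X],
      Function.Injective (LinearMap.lTensor X f)

/-- A module `M` is pure injective if `Hom(-, M)` sends pure monomorphisms to
surjections, i.e. every map to `M` extends along any pure monomorphism. -/
def IsPureInjective (R : Type*) [CommRing R] (M : Type v) [AddCommGroup M]
    [Module R M] : Prop :=
  ∀ ⦃L N : Type v⦄ [AddCommGroup L] [Module R L] [AddCommGroup N] [Module R N]
    (f : L →ₗ[R] N), IsPureMono.{_, v, v, v} f →
      ∀ g : L →ₗ[R] M, ∃ h : N →ₗ[R] M, h.comp f = g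

/-!
Since `X` is pure injective and the evaluation `X → X⋆⋆` into the double character module is a
pure monomorphism, `X` is a retract of `(X⋆)⋆`, so `A ⊗ X` is a retract of `A ⊗ (X⋆)⋆`. For finitely
presented `A` and any `B`, the natural map `A ⊗ B⋆ → Hom(A, B)⋆` is an isomorphism: it is one for
finite free `A`, and both sides are right exact in `A` (`⋆` is exact because `ℚ/ℤ` is divisible),
so the five lemma applies to a finite presentation. And `Hom(A, B)⋆` is pure injective, as every
character module is: extending maps into `B⋆` along `f` is the same as `f ⊗ B` being injective.
-/

open TensorProduct

universe w

section

variable {R : Type*} [CommRing R]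

theorem isPureMono_iff_lcomp_surjective {L M : Type*} [AddCommGroup L] [Module R L]
    [AddCommGroup M] [Module R M] (f : L →ₗ[R] M) :
    IsPureMono.{_, _, _, w} f ↔ Function.Injective f ∧
      ∀ (B : Type w) [AddCommGroup B] [Module R B],
        Function.Surjective (f.lcomp R (CharacterModule B)) := by
  simp_rw [IsPureMono, LinearMap.lTensor_inj_iff_rTensor_inj,
    rTensor_injective_iff_lcomp_surjective]

theorem IsPureInjective.of_retract {M P : Type v} [AddCommGroup M] [Module R M]
    [AddCommGroup P] [Module R P] (hP : IsPureInjective R P) (s : M →ₗ[R] P) (r : P →ₗ[R] M)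
    (hrs : r ∘ₗ s = LinearMap.id) : IsPureInjective R M := by
  intro L N _ _ _ _ f hf g
  obtain ⟨h, hh⟩ := hP f hf (s ∘ₗ g)
  exact ⟨r ∘ₗ h, by rw [LinearMap.comp_assoc, hh, ← LinearMap.comp_assoc, hrs, LinearMap.id_comp]⟩

namespace CharacterModule

theorem isPureInjective (B : Type v) [AddCommGroup B] [Module R B] :
    IsPureInjective R (CharacterModule B) := by
  intro L N _ _ _ _ f hf g
  obtain ⟨h, rfl⟩ := ((isPureMono_iff_lcomp_surjective f).mp hf).2 B g
  exact ⟨h, rfl⟩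

variable (R) in
def eval (M : Type*) [AddCommGroup M] [Module R M] :
    M →ₗ[R] CharacterModule (CharacterModule M) where
  toFun m := { toFun := fun c => c m, map_zero' := rfl, map_add' := fun _ _ => rfl }
  map_add' m m' := by ext c; exact map_add c m m'
  map_smul' _ _ := rfl

theorem eval_injective (M : Type*) [AddCommGroup M] [Module R M] :
    Function.Injective (eval R M) :=
  (injective_iff_map_eq_zero _).mpr fun _ h => eq_zero_of_character_apply fun c => congr($h c)

theorem isPureMono_eval (M : Type*) [AddCommGroup M] [Module R M] :
    IsPureMono.{_, _, _, w} (eval R M) :=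
  (isPureMono_iff_lcomp_surjective _).mpr ⟨eval_injective M, fun B _ _ g =>
    ⟨dual (eval R B) ∘ₗ dual (dual g), rfl⟩⟩

theorem dual_exact {W₁ W₂ W₃ : Type*} [AddCommGroup W₁] [Module R W₁] [AddCommGroup W₂]
    [Module R W₂] [AddCommGroup W₃] [Module R W₃] {u : W₁ →ₗ[R] W₂} {v : W₂ →ₗ[R] W₃}
    (h : Function.Exact u v) : Function.Exact (dual v) (dual u) := by
  intro χ
  -- `χ` factors through the image of `v` by left exactness of `Hom(-, ℚ/ℤ)` over `ℤ`, and
  -- characters of the image extend to `W₃`.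
  refine ⟨fun hχ => ?_, by
    rintro ⟨χ', rfl⟩
    ext x
    exact congr(χ' $(h.apply_apply_eq_zero x)).trans χ'.map_zero⟩
  have hv : Function.Exact u.toAddMonoidHom.toIntLinearMap
      v.rangeRestrict.toAddMonoidHom.toIntLinearMap := fun y => by
    simpa [Subtype.ext_iff] using h y
  obtain ⟨χ', hχ'⟩ := (LinearMap.exact_lcomp_of_exact_of_surjective (AddCircle (1 : ℚ)) hv
    v.surjective_rangeRestrict χ.toIntLinearMap).mp (by ext x; exact congr($hχ x))
  obtain ⟨χ'', hχ''⟩ := dual_surjective_of_injective (LinearMap.range v).subtype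
    Subtype.val_injective χ'.toAddMonoidHom
  exact ⟨χ'', by ext x; exact congr($hχ'' (v.rangeRestrict x)).trans congr($hχ' x)⟩

variable (R) in
/-- `m ⊗ c ↦ (φ ↦ c (φ m))`, obtained from the evaluation pairing `M ⊗ Hom(M, B) → B`. -/
noncomputable def tensorDualHom (M B : Type*) [AddCommGroup M] [Module R M]
    [AddCommGroup B] [Module R B] :
    M ⊗[R] CharacterModule B →ₗ[R] CharacterModule (M →ₗ[R] B) :=
  TensorProduct.lift (homEquiv.symm.toLinearMap ∘ₗ dual (TensorProduct.lift LinearMap.applyₗ)).flip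

theorem tensorDualHom_naturality {M M' B : Type*} [AddCommGroup M] [Module R M]
    [AddCommGroup M'] [Module R M'] [AddCommGroup B] [Module R B] (u : M →ₗ[R] M') :
    dual (u.lcomp R B) ∘ₗ tensorDualHom R M B = tensorDualHom R M' B ∘ₗ u.rTensor _ :=
  TensorProduct.ext' fun _ _ => rfl

theorem tensorDualHom_pi_bijective (ι B : Type*) [Fintype ι] [DecidableEq ι]
    [AddCommGroup B] [Module R B] : Function.Bijective (tensorDualHom R (ι → R) B) := by
  let ψ : CharacterModule ((ι → R) →ₗ[R] B) →ₗ[R] (ι → R) ⊗[R] CharacterModule B :=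
    ∑ i, TensorProduct.mk R _ _ (Pi.single i 1) ∘ₗ dual (LinearMap.smulRightₗ (LinearMap.proj i))
  have hψθ : ψ ∘ₗ tensorDualHom R (ι → R) B = LinearMap.id := by
    refine TensorProduct.ext' fun x c => ?_
    have hcoord : ∀ i, dual (LinearMap.smulRightₗ (LinearMap.proj i))
        (tensorDualHom R (ι → R) B (x ⊗ₜ c)) = x i • c := fun i => rfl
    calc ψ (tensorDualHom R (ι → R) B (x ⊗ₜ c)) = ∑ i, Pi.single i 1 ⊗ₜ[R] (x i • c) := by
          simp only [ψ, LinearMap.sum_apply, LinearMap.comp_apply, hcoord, mk_apply]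
      _ = x ⊗ₜ c := by simp only [← smul_tmul, ← sum_tmul, ← pi_eq_sum_univ' x]
  have hθψ : tensorDualHom R (ι → R) B ∘ₗ ψ = LinearMap.id := by
    ext χ φ
    calc tensorDualHom R (ι → R) B (ψ χ) φ
        = ∑ i, χ (LinearMap.smulRightₗ (LinearMap.proj i) (φ (Pi.single i 1))) := by
          change eval R _ φ (tensorDualHom R (ι → R) B (ψ χ)) = _
          simp only [ψ, LinearMap.sum_apply, LinearMap.comp_apply, mk_apply, map_sum]
          rfl
      _ = χ φ := by
          rw [← map_sum]
          congr 1
          ext x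
          simp
  exact Function.bijective_iff_has_inverse.mpr
    ⟨ψ, LinearMap.congr_fun hψθ, LinearMap.congr_fun hθψ⟩

theorem tensorDualHom_bijective (A B : Type*) [AddCommGroup A] [Module R A]
    [Module.FinitePresentation R A] [AddCommGroup B] [Module R B] :
    Function.Bijective (tensorDualHom R A B) := by
  obtain ⟨n, m, q, p, hq, hpq⟩ := Module.FinitePresentation.exists_fin' R A
  exact LinearMap.bijective_of_surjective_of_bijective_of_right_exact _ _ _ _ _ _ _
    (tensorDualHom_naturality p) (tensorDualHom_naturality q) (rTensor_exact _ hpq hq)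
    (dual_exact (LinearMap.exact_lcomp_of_exact_of_surjective B hpq hq))
    (tensorDualHom_pi_bijective _ _).2 (tensorDualHom_pi_bijective _ _)
    (LinearMap.rTensor_surjective _ hq)
    (dual_surjective_of_injective _ (LinearMap.lcomp_injective_of_surjective q hq))

end CharacterModule

end

theorem isPureInjective_tensor_characterModule {R : Type v} [CommRing R] (A B : Type v)
    [AddCommGroup A] [Module R A] [Module.FinitePresentation R A] [AddCommGroup B] [Module R B] :
    IsPureInjective R (A ⊗[R] CharacterModule B) :=
  let e := LinearEquiv.ofBijective _ (CharacterModule.tensorDualHom_bijective A B)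
  (CharacterModule.isPureInjective _).of_retract e.toLinearMap e.symm.toLinearMap
    e.symm_comp

/-- If `A` is a finitely presented `R`-module and `X` is a pure injective
`R`-module, then `A ⊗[R] X` is pure injective. -/
theorem pureInjective_tmul
    {R : Type v} [CommRing R] (A X : Type v)
    [AddCommGroup A] [Module R A] [Module.FinitePresentation R A]
    [AddCommGroup X] [Module R X] (hX : IsPureInjective R X) :
    IsPureInjective R (TensorProduct R A X) := by
  obtain ⟨r, hr⟩ := hX (CharacterModule.eval R X) (CharacterModule.isPureMono_eval X) LinearMap.id
  exact (isPureInjective_tensor_characterModule A (CharacterModule X)).of_retract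
    ((CharacterModule.eval R X).lTensor A) (r.lTensor A)
    (by rw [← LinearMap.lTensor_comp, hr, LinearMap.lTensor_id])
end
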